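/- arXiv:1404.3033 — 4 statements merged into one kernel-verified Lean document; each statement's English description precedes it below -/
import Mathlib

section
/- Removal of a targeted vertex via residual thresholds: Let G be a finite simple graph with vertex set V and threshold function t : V → ℕ, let v ∈ V, and let S ⊆ V be a target set with v ∈ S. Let G − v be the subgraph of G induced on V ∖ {v}, and define the residual threshold function t' on V ∖ {v} by t'(w) = t(w) − 1 (truncated subtraction in ℕ) if w is a neighbor of v in G, and t'(w) = t(w) otherwise. Then for every round τ ≥ 0, Active_{G,t}[S,τ] = {v} ∪ Active_{G−v, t'}[S ∖ {v}, τ]. -/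
open Classical

/-- The influence diffusion (activation) process: `Active G t S τ` is the set of vertices
influenced within round `τ`, starting from target set `S`, in the graph `G` with
threshold function `t`. -/
noncomputable def Active {V : Type*} [Fintype V] (G : SimpleGraph V) (t : V → ℕ)
    (S : Finset V) : ℕ → Finset V
  | 0 => S
  | τ + 1 => Active G t S τ ∪
      Finset.univ.filter fun u => t u ≤ (G.neighborFinset u ∩ Active G t S τ).card

/-! Once `v` is active it contributes exactly one to the active-neighbour count of each of its
neighbours, which is what lowering their thresholds by one accounts for. -/

open Finset

section ActivationRound

variable {V : Type*} [Fintype V]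

noncomputable def activationRound (G : SimpleGraph V) (t : V → ℕ) (A : Finset V) : Finset V :=
  A ∪ univ.filter fun u => t u ≤ (G.neighborFinset u ∩ A).card

theorem active_succ (G : SimpleGraph V) (t : V → ℕ) (S : Finset V) (τ : ℕ) :
    Active G t S (τ + 1) = activationRound G t (Active G t S τ) :=
  rfl

@[simp]
theorem mem_activationRound {G : SimpleGraph V} {t : V → ℕ} {A : Finset V} {x : V} :
    x ∈ activationRound G t A ↔ x ∈ A ∨ t x ≤ #(G.neighborFinset x ∩ A) := by
  simp [activationRound]

end ActivationRound

namespace SimpleGraph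

variable {V : Type*} [DecidableEq V] (G : SimpleGraph V)

theorem card_neighborFinset_inter_insert {v : V} {B : Finset V} (hv : v ∉ B) (x : V)
    [Fintype (G.neighborSet x)] :
    #(G.neighborFinset x ∩ insert v B) =
      #(G.neighborFinset x ∩ B) + if G.Adj v x then 1 else 0 := by
  by_cases hadj : G.Adj v x
  · rw [inter_insert_of_mem (G.mem_neighborFinset x v |>.mpr hadj.symm),
      card_insert_of_notMem (fun h => hv (mem_inter.mp h).2), if_pos hadj]
  · rw [inter_insert_of_notMem (fun h => hadj ((G.mem_neighborFinset x v).mp h).symm),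
      if_neg hadj, add_zero]

theorem card_neighborFinset_induce_inter (s : Set V) [DecidableEq s] (x : s)
    [Fintype (G.neighborSet x)] [Fintype ((G.induce s).neighborSet x)] (C : Finset s) :
    #((G.induce s).neighborFinset x ∩ C) = #(G.neighborFinset x ∩ C.image Subtype.val) := by
  rw [← card_image_of_injective _ Subtype.val_injective]
  congr 1
  ext y
  simp

end SimpleGraph

theorem activationRound_insert_image {V : Type*} [Fintype V] (G : SimpleGraph V) (t : V → ℕ)
    (v : V) (C : Finset {w : V | w ≠ v}) :
    activationRound G t (insert v (C.image Subtype.val)) =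
      insert v ((activationRound (G.induce {w : V | w ≠ v})
        (fun w => if G.Adj v w.1 then t w.1 - 1 else t w.1) C).image Subtype.val) := by
  have hv : v ∉ C.image Subtype.val := by simp
  ext x
  by_cases hx : x = v
  · simp [activationRound, hx]
  · lift x to {w : V | w ≠ v} using hx
    rw [mem_activationRound, mem_insert, mem_insert, or_iff_right x.2, or_iff_right x.2,
      Subtype.val_injective.mem_finset_image, Subtype.val_injective.mem_finset_image,
      mem_activationRound, G.card_neighborFinset_inter_insert hv,
      G.card_neighborFinset_induce_inter]
    refine or_congr_right ?_
    split_ifs <;> omega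

/-- Removal of a targeted vertex via residual thresholds: if `v` belongs to the target
set `S`, then the activation process in `G` equals `{v}` together with the activation
process in `G − v` started from `S \ {v}`, where the thresholds of the neighbors of `v`
are decreased by one (truncated subtraction). -/
theorem active_remove_targeted_vertex {V : Type*} [Fintype V] (G : SimpleGraph V)
    (t : V → ℕ) (v : V) (S : Finset V) (hv : v ∈ S) (τ : ℕ) :
    Active G t S τ =
      insert v ((Active (G.induce {w : V | w ≠ v})
        (fun w => if G.Adj v w.1 then t w.1 - 1 else t w.1)
        (S.subtype (· ∈ {w : V | w ≠ v})) τ).image Subtype.val) := by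
  induction τ with
  | zero =>
    ext x
    by_cases hx : x = v <;> simp [Active, hx, hv]
  | succ τ ih =>
    rw [active_succ, active_succ, ih, activationRound_insert_image]
end

section
/- Let G be the complete graph on a finite vertex set V with |V| = n, let t : V → ℕ be a threshold function, and let S ⊆ V be such that for each v ∈ S and each w ∈ V ∖ S one has t(v) ≥ t(w). Then for every round τ ≥ 1, if |Active[S,τ]| ≠ n, then S ∩ {v ∈ V : t(v) ≤ |Active[S,τ−1]|} = ∅. -/
open Classical

/-!
In the complete graph a not yet active vertex sees every active vertex, so it becomes active
as soon as its threshold is at most the number of active vertices. If some `v ∈ S` has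
`t v ≤ |Active[S,τ]|`, then every vertex outside `S` has threshold at most `t v`, and every
vertex of `S` is already active; hence all `n` vertices are active in round `τ + 1`.
-/

namespace Active

variable {V : Type*} [Fintype V] (G : SimpleGraph V) (t : V → ℕ) (S : Finset V)

lemma subset_succ (τ : ℕ) : Active G t S τ ⊆ Active G t S (τ + 1) :=
  Finset.subset_union_left

lemma start_subset (τ : ℕ) : S ⊆ Active G t S τ := by
  induction τ with
  | zero => rfl
  | succ τ ih => exact ih.trans (subset_succ G t S τ)

variable {G t S}

lemma mem_succ_of_le_card {u : V} {τ : ℕ}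
    (hu : t u ≤ (G.neighborFinset u ∩ Active G t S τ).card) : u ∈ Active G t S (τ + 1) :=
  Finset.mem_union_right _ (Finset.mem_filter.mpr ⟨Finset.mem_univ u, hu⟩)

lemma top_mem_succ_of_le_card {u : V} {τ : ℕ} (hu : t u ≤ (Active ⊤ t S τ).card) :
    u ∈ Active ⊤ t S (τ + 1) := by
  by_cases hact : u ∈ Active ⊤ t S τ
  · exact subset_succ _ t S τ hact
  · refine mem_succ_of_le_card (hu.trans_eq (congrArg Finset.card ?_))
    refine (Finset.inter_eq_right.mpr fun x hx => ?_).symm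
    rw [SimpleGraph.mem_neighborFinset, SimpleGraph.top_adj]
    exact fun hux => hact (hux ▸ hx)

lemma top_succ_eq_univ_of_forall_le_card {τ : ℕ}
    (h : ∀ w ∉ S, t w ≤ (Active ⊤ t S τ).card) : Active ⊤ t S (τ + 1) = Finset.univ := by
  refine Finset.eq_univ_of_forall fun w => ?_
  by_cases hw : w ∈ S
  · exact start_subset _ t S (τ + 1) hw
  · exact top_mem_succ_of_le_card (h w hw)

end Active

/-- On the complete graph, if the target set `S` consists of vertices of highest threshold
and not all `n` vertices are influenced within round `τ + 1 ≥ 1`, then no vertex of `S`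
has threshold at most the number of vertices influenced within round `τ`. -/
theorem active_complete_not_fully_active {V : Type*} [Fintype V] (n : ℕ)
    (hn : Fintype.card V = n) (t : V → ℕ) (S : Finset V)
    (hS : ∀ v ∈ S, ∀ w, w ∉ S → t w ≤ t v) (τ : ℕ)
    (hne : (Active (⊤ : SimpleGraph V) t S (τ + 1)).card ≠ n) :
    S ∩ Finset.univ.filter
      (fun v => t v ≤ (Active (⊤ : SimpleGraph V) t S τ).card) = ∅ := by
  refine Finset.eq_empty_of_forall_notMem fun v hv => hne ?_
  obtain ⟨hvS, hvt⟩ : v ∈ S ∧ t v ≤ (Active ⊤ t S τ).card := by simpa using hv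
  have hall_active := Active.top_succ_eq_univ_of_forall_le_card fun w hw =>
    (hS v hvS w hw).trans hvt
  rw [hall_active, Finset.card_univ, hn]
end

section
/- Exchange lemma for complete graphs: Let G be the complete graph on a finite vertex set V, let t : V → ℕ be a threshold function, and let S ⊆ V be such that for each v ∈ S and each w ∈ V ∖ S one has t(v) ≥ t(w). Then for every S' ⊆ V with |S'| = |S| and every round τ ≥ 0, |Active[S,τ]| ≥ |Active[S',τ]|. -/
/-!
On the complete graph a vertex outside the active set `A` sees all of `A`, so one round adds
exactly the vertices of threshold at most `|A|`. Writing `L k` for the vertices of threshold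
below `k`, the invariant `|A' ∪ L k| ≤ |A ∪ L k|` for all `k` is preserved by a round, and at
`k = 0` it is the claimed inequality. It holds initially because `S` is either disjoint from
`L k` or, when every vertex outside `S` lies in `L k`, `S ∪ L k` is everything.
-/

open Classical

open Finset

section

variable {V : Type*} [Fintype V]

noncomputable def belowThreshold (t : V → ℕ) (k : ℕ) : Finset V :=
  univ.filter fun u => t u < k

@[simp]
lemma mem_belowThreshold {t : V → ℕ} {k : ℕ} {u : V} : u ∈ belowThreshold t k ↔ t u < k := by
  simp [belowThreshold]

@[simp]
lemma belowThreshold_zero (t : V → ℕ) : belowThreshold t 0 = ∅ := by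
  ext u
  simp

lemma belowThreshold_mono (t : V → ℕ) : Monotone (belowThreshold t) :=
  fun _ _ hjk _ hu => mem_belowThreshold.2 ((mem_belowThreshold.1 hu).trans_le hjk)

lemma belowThreshold_union_belowThreshold (t : V → ℕ) (j k : ℕ) :
    belowThreshold t j ∪ belowThreshold t k = belowThreshold t (max j k) := by
  ext u
  simp

lemma active_top_succ (t : V → ℕ) (S : Finset V) (τ : ℕ) :
    Active ⊤ t S (τ + 1) =
      Active ⊤ t S τ ∪ belowThreshold t ((Active ⊤ t S τ).card + 1) := by
  ext u
  simp only [Active, mem_union, mem_filter, mem_univ, true_and, mem_belowThreshold,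
    Nat.lt_succ_iff]
  by_cases hu : u ∈ Active ⊤ t S τ
  · simp [hu]
  · rw [inter_eq_right.2 fun v hv => ?_]
    simpa using fun huv : u = v => hu (huv ▸ hv)

lemma card_union_belowThreshold_le_of_top_thresholds {t : V → ℕ} {S : Finset V}
    (hS : ∀ v ∈ S, ∀ w, w ∉ S → t w ≤ t v) {S' : Finset V} (hcard : S'.card = S.card)
    (k : ℕ) : (S' ∪ belowThreshold t k).card ≤ (S ∪ belowThreshold t k).card := by
  by_cases hout : ∀ w, w ∉ S → t w < k
  · have hall : S ∪ belowThreshold t k = univ :=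
      eq_univ_of_forall fun w => by
        by_cases hw : w ∈ S
        · exact mem_union_left _ hw
        · exact mem_union_right _ (mem_belowThreshold.2 (hout w hw))
    rw [hall]
    exact card_le_univ _
  · push Not at hout
    obtain ⟨w, hwS, hkw⟩ := hout
    have hdisj : Disjoint S (belowThreshold t k) :=
      disjoint_left.2 fun v hv hvk =>
        (mem_belowThreshold.1 hvk).not_ge (hkw.trans (hS v hv w hwS))
    calc (S' ∪ belowThreshold t k).card
        ≤ S'.card + (belowThreshold t k).card := card_union_le _ _
      _ = (S ∪ belowThreshold t k).card := by rw [card_union_of_disjoint hdisj, hcard]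

lemma card_union_belowThreshold_step {t : V → ℕ} {A B : Finset V}
    (h : ∀ k, (B ∪ belowThreshold t k).card ≤ (A ∪ belowThreshold t k).card) (k : ℕ) :
    (B ∪ belowThreshold t (B.card + 1) ∪ belowThreshold t k).card ≤
      (A ∪ belowThreshold t (A.card + 1) ∪ belowThreshold t k).card := by
  have hBA : B.card ≤ A.card := by simpa using h 0
  simp only [union_assoc, belowThreshold_union_belowThreshold]
  calc (B ∪ belowThreshold t (max (B.card + 1) k)).card
      ≤ (B ∪ belowThreshold t (max (A.card + 1) k)).card :=
        card_le_card (union_subset_union_right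
          (belowThreshold_mono t (max_le_max_right k (by omega))))
    _ ≤ _ := h _

lemma card_active_top_union_belowThreshold_le {t : V → ℕ} {S : Finset V}
    (hS : ∀ v ∈ S, ∀ w, w ∉ S → t w ≤ t v) {S' : Finset V} (hcard : S'.card = S.card)
    (τ k : ℕ) :
    (Active ⊤ t S' τ ∪ belowThreshold t k).card ≤
      (Active ⊤ t S τ ∪ belowThreshold t k).card := by
  induction τ generalizing k with
  | zero => exact card_union_belowThreshold_le_of_top_thresholds hS hcard k
  | succ τ ih =>
    rw [active_top_succ, active_top_succ]
    exact card_union_belowThreshold_step ih k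

end

/-- Exchange lemma for complete graphs: a target set consisting of vertices of highest
threshold influences, at every round, at least as many vertices as any other target set
of the same cardinality. -/
theorem active_complete_exchange {V : Type*} [Fintype V] (t : V → ℕ) (S : Finset V)
    (hS : ∀ v ∈ S, ∀ w, w ∉ S → t w ≤ t v)
    (S' : Finset V) (hcard : S'.card = S.card) (τ : ℕ) :
    (Active (⊤ : SimpleGraph V) t S' τ).card ≤ (Active (⊤ : SimpleGraph V) t S τ).card := by
  simpa using card_active_top_union_belowThreshold_le hS hcard τ 0
end

section
/- Root-in-target decomposition on trees: Let T be a finite tree with vertex set V and threshold function t : V → ℕ, rooted at a vertex r whose children (i.e., neighbors) are v₁, …, v_d. For each i, let T(vᵢ) be the subtree of T − r containing vᵢ (equivalently, the connected component of the graph obtained from T by deleting r that contains vᵢ), and let tᵢ' be the threshold function on T(vᵢ) that equals t except that tᵢ'(vᵢ) = t(vᵢ) − 1 (truncated subtraction in ℕ). Then for every target set S ⊆ V with r ∈ S and every round τ ≥ 0, Active_T[S,τ] = {r} ∪ ⋃_{i=1}^{d} Active_{T(vᵢ), tᵢ'}[S ∩ V(T(vᵢ)), τ]. -/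
open Classical

/-- `treeComponent G r c` is the set of vertices of the connected component of `G − r`
containing `c` (the subtree hanging from the child `c` when the tree `G` is rooted at `r`). -/
def treeComponent {V : Type*} (G : SimpleGraph V) (r c : V) : Set V :=
  {w : V | ∃ (hw : w ≠ r) (hc : c ≠ r),
    (G.induce {x : V | x ≠ r}).Reachable ⟨w, hw⟩ ⟨c, hc⟩}

/-!
The root `r` is a target, so it is active from round 0 on and its only effect on a child `c` is
to supply one active neighbour, i.e. to lower the threshold of `c` by one. Removing `r` splits
the tree into the subtrees `T(c)`, which `r` alone connects to the rest, so each of them evolves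
on its own. In general: if every outside neighbour of a vertex set `s` is a target, the process
inside `s` is the process on `G[s]` with each threshold lowered by the number of outside
neighbours.
-/

open Finset

section Activation

variable {V : Type*} [Fintype V] (G : SimpleGraph V) (t : V → ℕ) (S : Finset V)

lemma subset_active : ∀ τ, S ⊆ Active G t S τ
  | 0 => subset_rfl
  | τ + 1 => (subset_active τ).trans subset_union_left

lemma mem_active_succ {u : V} {τ : ℕ} :
    u ∈ Active G t S (τ + 1) ↔
      u ∈ Active G t S τ ∨ t u ≤ #(G.neighborFinset u ∩ Active G t S τ) := by
  simp [Active]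

lemma card_neighborFinset_inter_eq_induce [DecidableEq V] (s : Set V) [DecidableEq s]
    (A : Finset V) (A' : Finset s) (hA : ∀ a : s, a.1 ∈ A ↔ a ∈ A') (u : s) :
    #(G.neighborFinset u ∩ A) =
      #((G.induce s).neighborFinset u ∩ A') +
        #((G.neighborFinset u ∩ A).filter (· ∉ s)) := by
  have hinside :
      (G.neighborFinset u ∩ A).subtype (· ∈ s) = (G.induce s).neighborFinset u ∩ A' := by
    ext a
    simp [hA]
  rw [← hinside, card_subtype, card_filter_add_card_filter_not]

theorem mem_active_iff_mem_active_induce (s : Set V)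
    (hS : ∀ u ∈ s, ∀ x ∉ s, G.Adj u x → x ∈ S) (t' : s → ℕ)
    (ht' : ∀ u : s, t' u = t u - #((G.neighborFinset u).filter (· ∉ s))) (τ : ℕ) (u : s) :
    u.1 ∈ Active G t S τ ↔ u ∈ Active (G.induce s) t' (S.subtype (· ∈ s)) τ := by
  induction τ generalizing u with
  | zero => exact mem_subtype.symm
  | succ τ ih =>
    have houter : (G.neighborFinset u ∩ Active G t S τ).filter (· ∉ s) =
        (G.neighborFinset u).filter (· ∉ s) := by
      ext x
      simp only [mem_filter, mem_inter, SimpleGraph.mem_neighborFinset, and_congr_left_iff,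
        and_iff_left_iff_imp]
      exact fun hx hux => subset_active G t S τ (hS u u.2 x hx hux)
    rw [mem_active_succ, mem_active_succ, ih, card_neighborFinset_inter_eq_induce G s _ _ ih,
      houter, ht', Nat.sub_le_iff_le_add]
    -- the two sides differ only in the `DecidableEq s` instance used for `∩`
    congr!

end Activation

section TreeComponent

variable {V : Type*} {G : SimpleGraph V} {r c c' w x : V}

lemma ne_of_mem_treeComponent (hw : w ∈ treeComponent G r c) : w ≠ r := hw.1

lemma self_mem_treeComponent (hc : G.Adj r c) : c ∈ treeComponent G r c :=
  ⟨hc.ne', hc.ne', .rfl⟩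

lemma mem_treeComponent_of_adj (hw : w ∈ treeComponent G r c) (hwx : G.Adj w x) (hx : x ≠ r) :
    x ∈ treeComponent G r c := by
  obtain ⟨hwr, hcr, hreach⟩ := hw
  have hxw : (G.induce {x | x ≠ r}).Adj ⟨x, hx⟩ ⟨w, hwr⟩ := hwx.symm
  exact ⟨hx, hcr, hxw.reachable.trans hreach⟩

lemma eq_of_adj_of_notMem_treeComponent (hw : w ∈ treeComponent G r c) (hwx : G.Adj w x)
    (hx : x ∉ treeComponent G r c) : x = r := by
  by_contra hxr
  exact hx (mem_treeComponent_of_adj hw hwx hxr)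

lemma SimpleGraph.Reachable.exists_mem_treeComponent (h : G.Reachable r w) (hw : w ≠ r) :
    ∃ c, G.Adj r c ∧ w ∈ treeComponent G r c := by
  rw [SimpleGraph.reachable_iff_reflTransGen] at h
  induction h with
  | refl => exact absurd rfl hw
  | @tail a b _ hab ih =>
    by_cases har : a = r
    · subst har
      exact ⟨b, hab, self_mem_treeComponent hab⟩
    · obtain ⟨c, hc, ha⟩ := ih har
      exact ⟨c, hc, mem_treeComponent_of_adj ha hab hw⟩

/-- Every edge of an acyclic graph is a bridge, and a walk from `c'` to `c` avoiding `r`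
would survive the deletion of the edge `rc` as the detour `r c' … c`. -/
lemma SimpleGraph.IsAcyclic.eq_of_mem_treeComponent (hG : G.IsAcyclic) (hc : G.Adj r c)
    (hc' : G.Adj r c') (hw : w ∈ treeComponent G r c) (hw' : w ∈ treeComponent G r c') :
    c = c' := by
  by_contra hne
  obtain ⟨_, _, hreach⟩ := hw
  obtain ⟨_, hcr', hreach'⟩ := hw'
  let f : G.induce {x | x ≠ r} →g G.deleteEdges {s(r, c)} :=
    ⟨Subtype.val, fun {a b} hab => SimpleGraph.deleteEdges_adj.2 ⟨hab, by
      have : (a : V) ≠ r := a.2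
      have : (b : V) ≠ r := b.2
      simp_all⟩⟩
  have hrc' : (G.deleteEdges {s(r, c)}).Adj r c' := by
    simp [hc', Ne.symm hne, hcr']
  have hdetour : (G.deleteEdges {s(r, c)}).Reachable r c :=
    hrc'.reachable.trans ((hreach'.symm.trans hreach).map f)
  exact SimpleGraph.isAcyclic_iff_forall_adj_isBridge.1 hG hc hdetour

lemma SimpleGraph.IsAcyclic.card_neighborFinset_filter_notMem_treeComponent
    [Fintype (G.neighborSet w)] (hG : G.IsAcyclic) (hc : G.Adj r c)
    (hw : w ∈ treeComponent G r c) :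
    #((G.neighborFinset w).filter (· ∉ treeComponent G r c)) = if w = c then 1 else 0 := by
  have houter : (G.neighborFinset w).filter (· ∉ treeComponent G r c) =
      if w = c then {r} else ∅ := by
    ext x
    simp only [mem_filter, SimpleGraph.mem_neighborFinset]
    constructor
    · rintro ⟨hwx, hx⟩
      obtain rfl := eq_of_adj_of_notMem_treeComponent hw hwx hx
      obtain rfl := hG.eq_of_mem_treeComponent hc hwx.symm hw (self_mem_treeComponent hwx.symm)
      simp
    · split_ifs with hwc
      · rintro hx
        rw [mem_singleton.1 hx, hwc]
        exact ⟨hc.symm, fun h => ne_of_mem_treeComponent h rfl⟩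
      · simp
  rw [houter]
  split_ifs <;> rfl

end TreeComponent

lemma mem_biUnion_image_val_iff {ι α : Type*} [DecidableEq α] {I : Finset ι} {s : ι → Set α}
    {F : ∀ i, Finset (s i)} {i : ι} (hi : i ∈ I) {a : α} (ha : a ∈ s i)
    (huniq : ∀ j ∈ I, a ∈ s j → j = i) :
    a ∈ I.biUnion (fun j => (F j).image Subtype.val) ↔ ⟨a, ha⟩ ∈ F i := by
  simp only [mem_biUnion, mem_image]
  constructor
  · rintro ⟨j, hj, b, hb, rfl⟩
    obtain rfl := huniq j hj b.2
    exact hb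
  · exact fun h => ⟨i, hi, _, h, rfl⟩

/-- Root-in-target decomposition on trees: if the tree `G` is rooted at `r ∈ S`, then the
activation process in `G` equals `{r}` together with the union, over all children `c` of
`r`, of the activation processes in the subtrees `T(c)` (with the threshold of `c`
decreased by one) started from the corresponding parts of `S`. -/
theorem active_tree_root_decomposition {V : Type*} [Fintype V] (G : SimpleGraph V)
    (hG : G.IsTree) (t : V → ℕ) (r : V) (S : Finset V) (hr : r ∈ S) (τ : ℕ) :
    Active G t S τ =
      insert r ((G.neighborFinset r).biUnion fun c =>
        (Active (G.induce (treeComponent G r c))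
          (fun u => if u.1 = c then t c - 1 else t u.1)
          (S.subtype (· ∈ treeComponent G r c)) τ).image Subtype.val) := by
  ext u
  rcases eq_or_ne u r with rfl | hur
  · simp [subset_active G t S τ hr]
  obtain ⟨c, hc, huc⟩ := (hG.connected.preconnected u r).symm.exists_mem_treeComponent hur
  have hchild : ∀ c' ∈ G.neighborFinset r, u ∈ treeComponent G r c' → c' = c :=
    fun c' hc' huc' => hG.isAcyclic.eq_of_mem_treeComponent
      ((G.mem_neighborFinset _ _).1 hc') hc huc' huc
  rw [mem_insert, or_iff_right hur,
    mem_biUnion_image_val_iff ((G.mem_neighborFinset _ _).2 hc) huc hchild]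
  refine mem_active_iff_mem_active_induce G t S _ ?_ _ ?_ τ ⟨u, huc⟩
  · exact fun w hw x hx hwx => eq_of_adj_of_notMem_treeComponent hw hwx hx ▸ hr
  · intro w
    rw [hG.isAcyclic.card_neighborFinset_filter_notMem_treeComponent hc w.2]
    split_ifs with hwc
    · rw [hwc]
    · rfl
end
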